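/- For every integer k ≥ 1 and every integer n with 2^{2k-1} ≤ n ≤ 2^{2k+1} - 1, we have S(n) ≥ 2^{k-1}; moreover, S(n) = 2^{k-1} if and only if n = 3·4^{k-1} - 1. -/

import Mathlib

/-- `inv2 n` is the number of inversions in the binary representation of `n`,
i.e. the number of pairs of bit positions `a > b` such that bit `a` of `n` is `1`
and bit `b` of `n` is `0`. -/
def inv2 (n : ℕ) : ℕ :=
  ((Finset.range (n + 1) ×ˢ Finset.range (n + 1)).filter
    (fun p => p.2 < p.1 ∧ n.testBit p.1 = true ∧ n.testBit p.2 = false)).card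

/-- `iSeq n = (-1)^(inv2 n)`. -/
def iSeq (n : ℕ) : ℤ := (-1) ^ inv2 n


/-- The summatory function `S N = ∑_{0 ≤ n ≤ N} iSeq n`. -/
def S (N : ℕ) : ℤ := ∑ n ∈ Finset.range (N + 1), iSeq n

/-!
Appending a binary digit `1` to `n` creates no inversion, appending a `0` creates one per `1`-bit
of `n`; hence `iSeq (2n+1) = iSeq n` and `iSeq (2n) = iSeq n * t n` with `t` the Thue–Morse sign.
Summing in blocks of four gives `S (4m+3) = 2 S m`, `S (4m+4) = S (4m+6) = S m + S (m+1)`, and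
`S (4m+5) = 2 S (m+1)` or `2 S m` according as `t (m+1) = 1` or `-1`. When `n` runs over one
interval `[2^(2j+1) - 1, 2^(2j+3) - 1]`, the arguments `m`, `m+1` run over the previous one, so the
bound `2^j` doubles. Equality survives only through `4m+3`: `S m` and `S (m+1)` differ by one, and
`t` is `-1` at `3·4^j - 1` but `1` at `3·4^j`.
-/

open Finset

namespace Nat

lemma lt_of_testBit_of_lt_two_pow {n L a : ℕ} (hn : n < 2 ^ L) (ha : n.testBit a = true) :
    a < L :=
  (Nat.pow_lt_pow_iff_right (by norm_num)).1 ((ge_two_pow_of_testBit ha).trans_lt hn)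

lemma testBit_two_mul_succ (n i : ℕ) : (2 * n).testBit (i + 1) = n.testBit i := by
  rw [testBit_add_one, Nat.mul_div_cancel_left n two_pos]

lemma testBit_two_mul_add_one_succ (n i : ℕ) : (2 * n + 1).testBit (i + 1) = n.testBit i := by
  rw [testBit_add_one, show (2 * n + 1) / 2 = n by omega]

lemma card_filter_testBit_eq_length_bitIndices {n L : ℕ} (hn : n < 2 ^ L) :
    #{a ∈ range L | n.testBit a} = n.bitIndices.length := by
  rw [← List.toFinset_card_of_nodup bitIndices_nodup]
  congr 1
  ext a
  simpa using fun ha => lt_of_testBit_of_lt_two_pow hn ha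

end Nat

-- `inv2 n` is definitionally `inversionsBelow n (n + 1)`.
def inversionsBelow (n L : ℕ) : ℕ :=
  #{p ∈ range L ×ˢ range L | p.2 < p.1 ∧ n.testBit p.1 = true ∧ n.testBit p.2 = false}

lemma inversionsBelow_eq_of_lt_two_pow {n L M : ℕ} (hL : n < 2 ^ L) (hM : n < 2 ^ M) :
    inversionsBelow n L = inversionsBelow n M := by
  unfold inversionsBelow
  congr 1
  ext ⟨a, b⟩
  simp only [mem_filter, mem_product, mem_range]
  constructor <;> rintro ⟨-, hba, ha, hb⟩
  · have := Nat.lt_of_testBit_of_lt_two_pow hM ha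
    exact ⟨⟨this, hba.trans this⟩, hba, ha, hb⟩
  · have := Nat.lt_of_testBit_of_lt_two_pow hL ha
    exact ⟨⟨this, hba.trans this⟩, hba, ha, hb⟩

lemma inv2_eq_inversionsBelow {n L : ℕ} (hn : n < 2 ^ L) : inv2 n = inversionsBelow n L :=
  inversionsBelow_eq_of_lt_two_pow (Nat.lt_two_pow_self.trans (Nat.pow_lt_pow_succ one_lt_two)) hn

lemma inversionsBelow_eq_sum (n L : ℕ) :
    inversionsBelow n L = ∑ a ∈ range L, ∑ b ∈ range L,
      if b < a ∧ n.testBit a = true ∧ n.testBit b = false then 1 else 0 := by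
  rw [inversionsBelow, card_filter, sum_product]

lemma inversionsBelow_two_mul_add_one_succ (n L : ℕ) :
    inversionsBelow (2 * n + 1) (L + 1) = inversionsBelow n L := by
  rw [inversionsBelow_eq_sum, inversionsBelow_eq_sum, sum_range_succ']
  simp only [Nat.not_lt_zero, false_and, if_false, sum_const_zero, add_zero]
  refine sum_congr rfl fun a _ => ?_
  rw [sum_range_succ']
  simp [Nat.testBit_two_mul_add_one_succ, Nat.testBit_zero]

lemma inversionsBelow_two_mul_succ (n L : ℕ) :
    inversionsBelow (2 * n) (L + 1) = inversionsBelow n L + #{a ∈ range L | n.testBit a} := by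
  rw [inversionsBelow_eq_sum, inversionsBelow_eq_sum, card_filter, ← sum_add_distrib,
    sum_range_succ']
  simp only [Nat.not_lt_zero, false_and, if_false, sum_const_zero, add_zero]
  refine sum_congr rfl fun a _ => ?_
  rw [sum_range_succ']
  simp [Nat.testBit_two_mul_succ, Nat.testBit_zero]

lemma inv2_two_mul_add_one (n : ℕ) : inv2 (2 * n + 1) = inv2 n := by
  have hn : n < 2 ^ n := Nat.lt_two_pow_self
  rw [inv2_eq_inversionsBelow (L := n + 1) (by rw [pow_succ]; omega),
    inversionsBelow_two_mul_add_one_succ, ← inv2_eq_inversionsBelow hn]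

lemma inv2_two_mul (n : ℕ) : inv2 (2 * n) = inv2 n + n.bitIndices.length := by
  have hn : n < 2 ^ n := Nat.lt_two_pow_self
  rw [inv2_eq_inversionsBelow (L := n + 1) (by rw [pow_succ]; omega),
    inversionsBelow_two_mul_succ, ← inv2_eq_inversionsBelow hn,
    Nat.card_filter_testBit_eq_length_bitIndices hn]

def thueMorse (n : ℕ) : ℤ := (-1) ^ n.bitIndices.length

lemma thueMorse_two_mul (n : ℕ) : thueMorse (2 * n) = thueMorse n := by
  simp [thueMorse]

lemma thueMorse_two_mul_add_one (n : ℕ) : thueMorse (2 * n + 1) = -thueMorse n := by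
  simp [thueMorse, pow_succ]

lemma thueMorse_mul_self (n : ℕ) : thueMorse n * thueMorse n = 1 := by
  rw [thueMorse, ← pow_add, ← two_mul, pow_mul]
  norm_num

lemma thueMorse_eq_one_or_eq_neg_one (n : ℕ) : thueMorse n = 1 ∨ thueMorse n = -1 :=
  neg_one_pow_eq_or ℤ _

lemma thueMorse_three_mul_four_pow (j : ℕ) : thueMorse (3 * 4 ^ j) = 1 := by
  rw [show 3 * 4 ^ j = 2 ^ (2 * j) * 3 by rw [pow_mul]; ring, thueMorse,
    Nat.bitIndices_two_pow_mul, List.length_map]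
  decide

lemma thueMorse_three_mul_four_pow_sub_one (j : ℕ) : thueMorse (3 * 4 ^ j - 1) = -1 := by
  induction j with
  | zero => decide
  | succ j ih =>
    have h4 : 1 ≤ 4 ^ j := Nat.one_le_pow _ _ (by norm_num)
    rw [show 3 * 4 ^ (j + 1) - 1 = 2 * (2 * (3 * 4 ^ j - 1) + 1) + 1 by rw [pow_succ]; omega,
      thueMorse_two_mul_add_one, thueMorse_two_mul_add_one, ih, neg_neg]

lemma iSeq_two_mul_add_one (n : ℕ) : iSeq (2 * n + 1) = iSeq n := by
  rw [iSeq, iSeq, inv2_two_mul_add_one]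

lemma iSeq_two_mul (n : ℕ) : iSeq (2 * n) = iSeq n * thueMorse n := by
  rw [iSeq, iSeq, inv2_two_mul, pow_add, thueMorse]

def twistedS (N : ℕ) : ℤ := ∑ n ∈ range (N + 1), iSeq n * thueMorse n

lemma Finset.sum_range_two_mul {M : Type*} [AddCommMonoid M] (f : ℕ → M) (n : ℕ) :
    ∑ i ∈ range (2 * n), f i = ∑ i ∈ range n, (f (2 * i) + f (2 * i + 1)) := by
  induction n with
  | zero => simp
  | succ n ih => rw [mul_add_one, sum_range_succ, sum_range_succ, sum_range_succ, ih, add_assoc]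

lemma S_succ (N : ℕ) : S (N + 1) = S N + iSeq (N + 1) := sum_range_succ _ _

lemma S_two_mul_add_one (m : ℕ) : S (2 * m + 1) = S m + twistedS m := by
  rw [S, show 2 * m + 1 + 1 = 2 * (m + 1) by ring, sum_range_two_mul, S, twistedS,
    ← sum_add_distrib]
  refine sum_congr rfl fun n _ => ?_
  rw [iSeq_two_mul, iSeq_two_mul_add_one, add_comm]

lemma twistedS_two_mul_add_one (m : ℕ) : twistedS (2 * m + 1) = S m - twistedS m := by
  rw [twistedS, show 2 * m + 1 + 1 = 2 * (m + 1) by ring, sum_range_two_mul, S, twistedS,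
    ← sum_sub_distrib]
  refine sum_congr rfl fun n _ => ?_
  rw [iSeq_two_mul, iSeq_two_mul_add_one, thueMorse_two_mul, thueMorse_two_mul_add_one]
  linear_combination iSeq n * thueMorse_mul_self n

lemma S_four_mul_add_three (m : ℕ) : S (4 * m + 3) = 2 * S m := by
  rw [show 4 * m + 3 = 2 * (2 * m + 1) + 1 by ring, S_two_mul_add_one, S_two_mul_add_one,
    twistedS_two_mul_add_one]
  ring

lemma S_four_mul_add_four (m : ℕ) : S (4 * m + 4) = S m + S (m + 1) := by
  rw [S_succ, S_four_mul_add_three, S_succ m, show 4 * m + 3 + 1 = 2 * (2 * (m + 1)) by ring,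
    iSeq_two_mul, iSeq_two_mul, thueMorse_two_mul]
  linear_combination iSeq (m + 1) * thueMorse_mul_self (m + 1)

lemma S_four_mul_add_five (m : ℕ) :
    S (4 * m + 5) = S m + S (m + 1) + iSeq (m + 1) * thueMorse (m + 1) := by
  rw [S_succ, S_four_mul_add_four, show 4 * m + 4 + 1 = 2 * (2 * (m + 1)) + 1 by ring,
    iSeq_two_mul_add_one, iSeq_two_mul]

lemma S_four_mul_add_six (m : ℕ) : S (4 * m + 6) = S m + S (m + 1) := by
  rw [S_succ, S_four_mul_add_five, show 4 * m + 5 + 1 = 2 * (2 * (m + 1) + 1) by ring,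
    iSeq_two_mul, iSeq_two_mul_add_one, thueMorse_two_mul_add_one]
  ring

-- The theorem's claim for `k = j + 1`, stated without truncated subtraction.
def SLowerBound (j n : ℕ) : Prop := 2 ^ j ≤ S n ∧ (S n = 2 ^ j ↔ n + 1 = 3 * 4 ^ j)

namespace SLowerBound

variable {j m : ℕ}

lemma four_mul_add_three (hm : SLowerBound j m) : SLowerBound (j + 1) (4 * m + 3) := by
  rw [SLowerBound, S_four_mul_add_three, pow_succ,
    show 4 * m + 3 + 1 = 3 * 4 ^ (j + 1) ↔ m + 1 = 3 * 4 ^ j by rw [pow_succ]; omega, ← hm.2]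
  exact ⟨by linarith [hm.1], by constructor <;> intro h <;> linarith⟩

lemma of_S_eq_add {n : ℕ} (hn : S n = S m + S (m + 1)) (hn4 : (n + 1) % 4 ≠ 0)
    (hm : SLowerBound j m) (hm' : SLowerBound j (m + 1)) : SLowerBound (j + 1) n := by
  refine ⟨by rw [hn, pow_succ]; linarith [hm.1, hm'.1], fun h => ?_, fun h => ?_⟩
  · rw [hn, pow_succ] at h
    have hm1 : m + 1 = 3 * 4 ^ j := hm.2.1 (by linarith [hm.1, hm'.1])
    have hm2 : m + 1 + 1 = 3 * 4 ^ j := hm'.2.1 (by linarith [hm.1, hm'.1])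
    omega
  · rw [pow_succ] at h
    omega

lemma four_mul_add_five (hm : SLowerBound j m) (hm' : SLowerBound j (m + 1)) :
    SLowerBound (j + 1) (4 * m + 5) := by
  have hstep : S (m + 1) = S m + iSeq (m + 1) := S_succ m
  have hn : ¬ 4 * m + 5 + 1 = 3 * 4 ^ (j + 1) := by rw [pow_succ]; omega
  rcases thueMorse_eq_one_or_eq_neg_one (m + 1) with ht | ht
  · have hS : S (4 * m + 5) = 2 * S (m + 1) := by rw [S_four_mul_add_five, ht]; linarith
    refine ⟨by rw [hS, pow_succ]; linarith [hm'.1], fun h => ?_, fun h => absurd h hn⟩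
    rw [hS, pow_succ] at h
    have hm1 : m + 1 = 3 * 4 ^ j - 1 := by have := hm'.2.1 (by linarith); omega
    rw [hm1, thueMorse_three_mul_four_pow_sub_one] at ht
    norm_num at ht
  · have hS : S (4 * m + 5) = 2 * S m := by rw [S_four_mul_add_five, ht]; linarith
    refine ⟨by rw [hS, pow_succ]; linarith [hm.1], fun h => ?_, fun h => absurd h hn⟩
    rw [hS, pow_succ] at h
    rw [hm.2.1 (by linarith), thueMorse_three_mul_four_pow] at ht
    norm_num at ht

end SLowerBound

theorem sLowerBound_of_two_pow_le {j n : ℕ} (h₁ : 2 ^ (2 * j + 1) ≤ n + 1)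
    (h₂ : n + 1 ≤ 2 ^ (2 * j + 3)) : SLowerBound j n := by
  induction j generalizing n with
  | zero =>
    obtain ⟨h₁, h₂⟩ : 1 ≤ n ∧ n ≤ 7 := by norm_num at h₁ h₂; omega
    interval_cases n <;> unfold SLowerBound <;> decide
  | succ j ih =>
    have hlo : 2 ^ (2 * (j + 1) + 1) = 4 * 2 ^ (2 * j + 1) := by ring
    have hhi : 2 ^ (2 * (j + 1) + 3) = 4 * 2 ^ (2 * j + 3) := by ring
    have hpos : 1 ≤ 2 ^ (2 * j + 1) := Nat.one_le_two_pow
    obtain ⟨m, rfl | rfl | rfl | rfl⟩ :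
        ∃ m, n = 4 * m + 3 ∨ n = 4 * m + 4 ∨ n = 4 * m + 5 ∨ n = 4 * m + 6 :=
      ⟨(n - 3) / 4, by omega⟩
    · exact (ih (by omega) (by omega)).four_mul_add_three
    · exact .of_S_eq_add (S_four_mul_add_four m) (by omega) (ih (by omega) (by omega))
        (ih (by omega) (by omega))
    · exact .four_mul_add_five (ih (by omega) (by omega)) (ih (by omega) (by omega))
    · exact .of_S_eq_add (S_four_mul_add_six m) (by omega) (ih (by omega) (by omega))
        (ih (by omega) (by omega))

theorem summatory_min_on_Ik (k : ℕ) (hk : 1 ≤ k) (n : ℕ)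
    (h₁ : 2 ^ (2 * k - 1) ≤ n) (h₂ : n ≤ 2 ^ (2 * k + 1) - 1) :
    2 ^ (k - 1) ≤ S n ∧ (S n = 2 ^ (k - 1) ↔ n = 3 * 4 ^ (k - 1) - 1) := by
  obtain ⟨j, rfl⟩ : ∃ j, k = j + 1 := ⟨k - 1, by omega⟩
  rw [show 2 * (j + 1) - 1 = 2 * j + 1 by omega] at h₁
  rw [show 2 * (j + 1) + 1 = 2 * j + 3 by ring] at h₂
  have hpow : 1 ≤ 2 ^ (2 * j + 3) := Nat.one_le_two_pow
  have h4 : 1 ≤ 4 ^ j := Nat.one_le_pow _ _ (by norm_num)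
  obtain ⟨hle, heq⟩ := sLowerBound_of_two_pow_le (j := j) (n := n) (by omega) (by omega)
  rw [Nat.add_sub_cancel]
  exact ⟨hle, heq.trans (by omega)⟩
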